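/- Let G be a finite simple graph, (i,j) an edge of G with endpoint degrees d_i ≥ d_j, and t = #Δ_G(i,j) the number of common neighbors of i and j in G. Then Ric₀_G(i,j) − Ric₀_{G^{+VN}}(i,j) = 2(1/d_i + 1/d_j − 1/(d_i+1) − 1/(d_j+1)) + t·(2/d_i + 1/d_j) − (t+1)·(2/(d_i+1) + 1/(d_j+1)). -/

import Mathlib

open Finset

attribute [local instance] Classical.propDecidable

variable {V : Type*} [Fintype V] [DecidableEq V]

/-- The virtual-node graph `G^{+VN}`: vertex set `V ∪ {v*}` (here `Option V`, with `none`
playing the role of the virtual node `v*`), original adjacency on `V`, and the virtual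
node adjacent to every original vertex. -/
def addVN (G : SimpleGraph V) : SimpleGraph (Option V) where
  Adj u v :=
    match u, v with
    | some a, some b => G.Adj a b
    | some _, none => True
    | none, some _ => True
    | none, none => False
  symm := by
    constructor
    intro u v h
    cases u <;> cases v <;> simp_all
    exact G.adj_symm h
  loopless := by
    constructor
    intro u h
    cases u <;> simp_all

/-- `#Δ(i,j)`: number of triangles containing the edge `(i,j)`, i.e. common neighbors. -/
noncomputable def triCount (G : SimpleGraph V) (i j : V) : ℕ :=
  (G.neighborFinset i ∩ G.neighborFinset j).card

/-- `#□^i(i,j)`: number of diagonal-free 4-cycles based at the edge `(i,j)`, seen from `i`. -/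
noncomputable def sqCount (G : SimpleGraph V) (i j : V) : ℕ :=
  ((G.neighborFinset i).filter (fun k => k ≠ j ∧ ¬ G.Adj k j ∧
    ∃ w, G.Adj w k ∧ G.Adj w j ∧ w ≠ i ∧ ¬ G.Adj w i)).card

/-- The diagonal-free 4-cycles based at the edge `(i,j)`, as pairs `(k, w)`. -/
noncomputable def fourCycles (G : SimpleGraph V) (i j : V) : Finset (V × V) :=
  Finset.univ.filter (fun p => G.Adj i p.1 ∧ p.1 ≠ j ∧ ¬ G.Adj p.1 j ∧
    G.Adj p.2 p.1 ∧ G.Adj p.2 j ∧ p.2 ≠ i ∧ ¬ G.Adj p.2 i)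

/-- `γ_max(i,j)`: maximum over nodes `k` of the number of diagonal-free 4-cycles based at
`(i,j)` passing through `k`. -/
noncomputable def gammaMax (G : SimpleGraph V) (i j : V) : ℕ :=
  Finset.univ.sup (fun x => ((fourCycles G i j).filter (fun p => p.1 = x ∨ p.2 = x)).card)

/-- The balanced Forman curvature of the edge `(i,j)`. -/
noncomputable def Ric (G : SimpleGraph V) (i j : V) : ℝ :=
  2 / (G.degree i : ℝ) + 2 / (G.degree j : ℝ) - 2
    + (triCount G i j : ℝ) *
        (2 / (max (G.degree i) (G.degree j) : ℝ) + 1 / (min (G.degree i) (G.degree j) : ℝ))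
    + ((gammaMax G i j : ℝ) / (max (G.degree i) (G.degree j) : ℝ)) *
        ((sqCount G i j : ℝ) + (sqCount G j i : ℝ))

/-- The triangle-only balanced Forman curvature `Ric₀` of the edge `(i,j)`. -/
noncomputable def Ric₀ (G : SimpleGraph V) (i j : V) : ℝ :=
  2 / (G.degree i : ℝ) + 2 / (G.degree j : ℝ) - 2
    + (triCount G i j : ℝ) *
        (2 / (max (G.degree i) (G.degree j) : ℝ) + 1 / (min (G.degree i) (G.degree j) : ℝ))

/-! Adding the virtual node raises every original degree by one and makes `v*` one more common
neighbour of every original edge; since `d_j ≤ d_i` implies `d_j + 1 ≤ d_i + 1`, the maxima and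
minima in both curvatures are read off the same way, and what remains is a field identity. -/

lemma addVN_neighborFinset_some (G : SimpleGraph V) (i : V) :
    (addVN G).neighborFinset (some i) =
      insert none ((G.neighborFinset i).map Function.Embedding.some) := by
  ext x
  rw [SimpleGraph.mem_neighborFinset]
  cases x <;> simp [addVN]

lemma addVN_degree_some (G : SimpleGraph V) (i : V) :
    (addVN G).degree (some i) = G.degree i + 1 := by
  rw [← SimpleGraph.card_neighborFinset_eq_degree, addVN_neighborFinset_some,
    card_insert_of_notMem (by simp), card_map, SimpleGraph.card_neighborFinset_eq_degree]

lemma addVN_triCount_some (G : SimpleGraph V) (i j : V) :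
    triCount (addVN G) (some i) (some j) = triCount G i j + 1 := by
  rw [triCount, addVN_neighborFinset_some, addVN_neighborFinset_some, ← insert_inter_distrib,
    ← map_inter, card_insert_of_notMem (by simp), card_map, triCount]

lemma Ric₀_of_degree_le {W : Type*} [Fintype W] [DecidableEq W] (G : SimpleGraph W) {i j : W}
    (hd : G.degree j ≤ G.degree i) :
    Ric₀ G i j = 2 / (G.degree i : ℝ) + 2 / (G.degree j : ℝ) - 2
      + (triCount G i j : ℝ) * (2 / (G.degree i : ℝ) + 1 / (G.degree j : ℝ)) := by
  rw [Ric₀, max_eq_left (by exact_mod_cast hd), min_eq_right (by exact_mod_cast hd)]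

theorem stmt_2_general (G : SimpleGraph V) (i j : V)
    (hd : G.degree j ≤ G.degree i) (t : ℕ) (ht : t = triCount G i j) :
    Ric₀ G i j - Ric₀ (addVN G) (some i) (some j)
      = 2 * (1 / (G.degree i : ℝ) + 1 / (G.degree j : ℝ)
            - 1 / ((G.degree i : ℝ) + 1) - 1 / ((G.degree j : ℝ) + 1))
        + (t : ℝ) * (2 / (G.degree i : ℝ) + 1 / (G.degree j : ℝ))
        - ((t : ℝ) + 1) * (2 / ((G.degree i : ℝ) + 1) + 1 / ((G.degree j : ℝ) + 1)) := by
  have hd_VN : (addVN G).degree (some j) ≤ (addVN G).degree (some i) := by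
    simpa only [addVN_degree_some] using Nat.succ_le_succ hd
  rw [Ric₀_of_degree_le G hd, Ric₀_of_degree_le (addVN G) hd_VN, addVN_degree_some,
    addVN_degree_some, addVN_triCount_some, ← ht]
  push_cast
  ring

/-- For an edge `(i,j)` of a finite simple graph `G` with `d_i ≥ d_j` and
`t = #Δ_G(i,j)` common neighbors, the triangle-only curvature difference caused by adding a
virtual node is exactly
`2(1/d_i + 1/d_j − 1/(d_i+1) − 1/(d_j+1)) + t(2/d_i + 1/d_j) − (t+1)(2/(d_i+1) + 1/(d_j+1))`. -/
theorem stmt_2 (G : SimpleGraph V) (i j : V) (hij : G.Adj i j)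
    (hd : G.degree j ≤ G.degree i) (t : ℕ) (ht : t = triCount G i j) :
    Ric₀ G i j - Ric₀ (addVN G) (some i) (some j)
      = 2 * (1 / (G.degree i : ℝ) + 1 / (G.degree j : ℝ)
            - 1 / ((G.degree i : ℝ) + 1) - 1 / ((G.degree j : ℝ) + 1))
        + (t : ℝ) * (2 / (G.degree i : ℝ) + 1 / (G.degree j : ℝ))
        - ((t : ℝ) + 1) * (2 / ((G.degree i : ℝ) + 1) + 1 / ((G.degree j : ℝ) + 1)) :=
  stmt_2_general G i j hd t ht
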